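/- Let λ be a partition of n and l a natural number ≥ 2. The number of cells in the Young diagram of λ whose hook length is divisible by l equals the l-weight of λ (the number of l-hooks removed to reach the l-core of λ). -/

import Mathlib

/-- Beta-set (first-column hook lengths with padding) of a partition given as a
weakly decreasing list of parts: `b_i = λ_i + (r - 1 - i)` (0-indexed). -/
def betaSet (L : List ℕ) : List ℕ :=
  (List.range L.length).map (fun i => L.getD i 0 + (L.length - 1 - i))

/-- The `l`-weight of a partition: the number of rim `l`-hooks removed to reach
the `l`-core, computed on the `l`-abacus as the total number of single-runner
moves needed to push all beads up. -/
def lWeight (l : ℕ) (L : List ℕ) : ℕ :=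
  ((betaSet L).map (· / l)).sum -
    ∑ j ∈ Finset.range l, (((betaSet L).filter (fun b => b % l = j)).length).choose 2

/-- Beta-set of the `l`-core: on each runner, push all beads to the lowest positions. -/
def lCoreBeta (l : ℕ) (L : List ℕ) : List ℕ :=
  (List.range l).flatMap (fun j =>
    (List.range (((betaSet L).filter (fun b => b % l = j)).length)).map (fun k => j + l * k))

/-- The `l`-core of a partition, recovered from the pushed-up beta-set. -/
def lCore (l : ℕ) (L : List ℕ) : List ℕ :=
  (((lCoreBeta l L).mergeSort (fun a b => b ≤ a)).mapIdx
    (fun i b => b - (L.length - 1 - i))).filter (fun a => 0 < a)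

/-- Hook length of the cell in row `i`, column `j` (both 0-indexed):
arm + leg + 1. -/
def hookLen (L : List ℕ) (i j : ℕ) : ℕ :=
  (L.getD i 0 - j) + ((L.drop (i + 1)).filter (fun a => j < a)).length

/-! On the abacus with beads at `b_i = λ_i + (r - 1 - i)`, the hook lengths in row `i` are the
distances `b_i - x` from the bead `b_i` to the empty positions `x < b_i`. Hence the cells of row
`i` whose hook length is divisible by `l` correspond to the empty positions below `b_i` on its
runner: `b_i / l` positions, less the beads occupying them. Summing over the rows counts every
pair of beads on a common runner once, which leaves `∑ b_i / l - ∑_runners (n_j choose 2)`. -/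

open Finset

theorem List.length_filter_eq_card (M : List ℕ) (p : ℕ → Bool) :
    (M.filter p).length = #{k ∈ Finset.range M.length | p (M.getD k 0)} := by
  induction M with
  | nil => simp
  | cons a M ih =>
    rw [card_filter, List.length_cons, Finset.sum_range_succ', ← card_filter]
    simp only [List.getD_cons_succ, List.getD_cons_zero, ← ih]
    by_cases ha : p a <;> simp [ha]

theorem List.length_filter_drop_eq_card (L : List ℕ) (m : ℕ) (p : ℕ → Bool) :
    ((L.drop m).filter p).length = #{k ∈ Finset.Ico m L.length | p (L.getD k 0)} := by
  rw [List.length_filter_eq_card, card_filter, card_filter, sum_Ico_eq_sum_range,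
    List.length_drop]
  simp [List.getD_eq_getElem?_getD, List.getElem?_drop]

theorem List.sum_map_range {M : Type*} [AddCommMonoid M] (n : ℕ) (g : ℕ → M) :
    ((List.range n).map g).sum = ∑ i ∈ Finset.range n, g i := by
  simp only [Finset.sum, range_val, Multiset.range, Multiset.map_coe, Multiset.sum_coe]

theorem List.length_filter_map_range (n : ℕ) (g : ℕ → ℕ) (p : ℕ → Bool) :
    (((List.range n).map g).filter p).length = #{i ∈ Finset.range n | p (g i)} := by
  rw [List.length_filter_eq_card, List.length_map, List.length_range]
  refine congrArg card (Finset.filter_congr fun i hi => ?_)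
  simp_all [List.getD_eq_getElem?_getD]

theorem Finset.sum_card_filter_lt {α : Type*} [LinearOrder α] (A : Finset α) :
    ∑ i ∈ A, #{k ∈ A | i < k} = (#A).choose 2 := by
  induction A using Finset.induction_on_max with
  | empty => simp
  | insert a s hlt ih =>
    have ha : a ∉ s := fun h => lt_irrefl a (hlt a h)
    have hshift : ∀ i ∈ s, #{k ∈ insert a s | i < k} = #{k ∈ s | i < k} + 1 := by
      intro i hi
      rw [filter_insert, if_pos (hlt i hi), card_insert_of_notMem (by simp [ha])]
    have htop : #{k ∈ insert a s | a < k} = 0 := by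
      simp only [card_eq_zero, filter_eq_empty_iff, mem_insert]
      rintro k (rfl | hk)
      exacts [lt_irrefl k, (hlt k hk).not_gt]
    rw [sum_insert ha, htop, sum_congr rfl hshift, sum_add_distrib, ih, card_insert_of_notMem ha,
      Nat.choose_succ_succ', Nat.choose_one_right]
    simp [add_comm]

theorem Finset.sum_card_filter_Ico_eq_sum_choose_two {κ : Type*} [DecidableEq κ] {t : Finset κ}
    {c : ℕ → κ} {r : ℕ} (hc : ∀ i ∈ Finset.range r, c i ∈ t) :
    ∑ i ∈ Finset.range r, #{k ∈ Ico (i + 1) r | c k = c i}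
      = ∑ a ∈ t, (#{i ∈ Finset.range r | c i = a}).choose 2 := by
  rw [← sum_fiberwise_of_maps_to hc]
  refine sum_congr rfl fun a _ => ?_
  rw [← sum_card_filter_lt]
  refine sum_congr rfl fun i hi => congrArg card ?_
  rw [mem_filter] at hi
  ext k
  simp only [mem_filter, mem_Ico, mem_range, hi.2]
  grind

theorem card_filter_mod_eq_range_self {l : ℕ} (hl : 0 < l) (n : ℕ) :
    #{x ∈ range n | x % l = n % l} = n / l := by
  have := Nat.count_modEq_card n hl n
  rw [Nat.count_eq_card_filter_range, if_neg (lt_irrefl _), add_zero] at this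
  convert this using 3
  rfl

def betaNum (L : List ℕ) (i : ℕ) : ℕ := L.getD i 0 + (L.length - 1 - i)

theorem betaSet_eq_map_betaNum (L : List ℕ) :
    betaSet L = (List.range L.length).map (betaNum L) := rfl

/-- On the abacus, the cells of row `i` correspond to the empty positions below the bead
`betaNum L i`: cell `(i, j)` to the position `cellGap L i j`, at distance `hookLen L i j`. -/
def cellGap (L : List ℕ) (i j : ℕ) : ℕ := j + #{k ∈ Ico (i + 1) L.length | L.getD k 0 ≤ j}

section

variable {L : List ℕ}

theorem getD_le_getD_of_le (hL : L.Pairwise (· ≥ ·)) {i k : ℕ} (hik : i ≤ k) :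
    L.getD k 0 ≤ L.getD i 0 := by
  rcases lt_or_ge k L.length with hk | hk
  · rcases hik.eq_or_lt with rfl | hik
    · rfl
    · rw [List.getD_eq_getElem _ _ hk, List.getD_eq_getElem _ _ (hik.trans hk)]
      exact List.pairwise_iff_getElem.mp hL i k (hik.trans hk) hk hik
  · rw [List.getD_eq_default _ _ hk]
    exact Nat.zero_le _

theorem betaNum_strictAntiOn (hL : L.Pairwise (· ≥ ·)) :
    StrictAntiOn (betaNum L) (Set.Iio L.length) := by
  intro i _ k hk hik
  have := getD_le_getD_of_le hL hik.le
  simp only [Set.mem_Iio] at hk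
  unfold betaNum
  omega

theorem hookLen_eq_card (i j : ℕ) :
    hookLen L i j = (L.getD i 0 - j) + #{k ∈ Ico (i + 1) L.length | j < L.getD k 0} := by
  simp [hookLen, List.length_filter_drop_eq_card]

theorem hookLen_add_cellGap {i j : ℕ} (hj : j < L.getD i 0) :
    hookLen L i j + cellGap L i j = betaNum L i := by
  have hsplit := card_filter_add_card_filter_not (s := Ico (i + 1) L.length)
    (fun k => j < L.getD k 0)
  simp only [not_lt, Nat.card_Ico] at hsplit
  rw [hookLen_eq_card, cellGap, betaNum]
  omega

theorem cellGap_strictMono (i : ℕ) : StrictMono (cellGap L i) := by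
  intro j j' hjj'
  have : #{k ∈ Ico (i + 1) L.length | L.getD k 0 ≤ j}
      ≤ #{k ∈ Ico (i + 1) L.length | L.getD k 0 ≤ j'} :=
    card_le_card (Finset.monotone_filter_right _ fun _ _ hk => hk.trans hjj'.le)
  unfold cellGap
  omega

theorem dvd_hookLen_iff {l i j : ℕ} (hj : j < L.getD i 0) :
    l ∣ hookLen L i j ↔ cellGap L i j % l = betaNum L i % l := by
  have h := hookLen_add_cellGap hj
  rw [show hookLen L i j = betaNum L i - cellGap L i j by omega]
  exact (Nat.modEq_iff_dvd' (by omega)).symm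

/-- Rows of length `≤ j` below row `i` form a final segment; according as it contains row `k`
or not, `cellGap L i j` lies above or below `betaNum L k`. -/
theorem cellGap_ne_betaNum (hL : L.Pairwise (· ≥ ·)) {i k : ℕ} (hik : i < k)
    (hk : k < L.length) (j : ℕ) : cellGap L i j ≠ betaNum L k := by
  rw [cellGap, betaNum]
  set short := {k' ∈ Ico (i + 1) L.length | L.getD k' 0 ≤ j}
  rcases le_or_gt (L.getD k 0) j with hkj | hjk
  · have hsub : Ico k L.length ⊆ short := fun k' hk' => by
      simp only [short, mem_filter, mem_Ico] at hk' ⊢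
      exact ⟨⟨by omega, hk'.2⟩, (getD_le_getD_of_le hL hk'.1).trans hkj⟩
    have := card_le_card hsub
    rw [Nat.card_Ico] at this
    omega
  · have hsub : short ⊆ Ico (k + 1) L.length := fun k' hk' => by
      simp only [short, mem_filter, mem_Ico] at hk' ⊢
      refine ⟨?_, hk'.1.2⟩
      by_contra! h
      have := getD_le_getD_of_le hL (show k' ≤ k by omega)
      omega
    have := card_le_card hsub
    rw [Nat.card_Ico] at this
    omega

theorem image_betaNum_Ico_subset (hL : L.Pairwise (· ≥ ·)) (i : ℕ) :
    (Ico (i + 1) L.length).image (betaNum L) ⊆ range (betaNum L i) := by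
  intro x hx
  obtain ⟨k, hk, rfl⟩ := mem_image.mp hx
  rw [mem_Ico] at hk
  exact mem_range.mpr <|
    betaNum_strictAntiOn hL (Set.mem_Iio.mpr (by omega)) (Set.mem_Iio.mpr hk.2) (by omega)

theorem injOn_betaNum_Ico (hL : L.Pairwise (· ≥ ·)) (i : ℕ) :
    Set.InjOn (betaNum L) (Ico (i + 1) L.length) :=
  (betaNum_strictAntiOn hL).injOn.mono fun _ hk => Set.mem_Iio.mpr (mem_Ico.mp hk).2

theorem image_cellGap (hL : L.Pairwise (· ≥ ·)) (i : ℕ) :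
    (range (L.getD i 0)).image (cellGap L i)
      = range (betaNum L i) \ (Ico (i + 1) L.length).image (betaNum L) := by
  refine eq_of_subset_of_card_le (fun x hx => ?_) ?_
  · obtain ⟨j, hj, rfl⟩ := mem_image.mp hx
    rw [mem_range] at hj
    refine mem_sdiff.mpr ⟨mem_range.mpr ?_, fun hmem => ?_⟩
    · have := hookLen_add_cellGap (L := L) hj
      have : 0 < hookLen L i j := by rw [hookLen]; omega
      omega
    · obtain ⟨k, hk, hkj⟩ := mem_image.mp hmem
      rw [mem_Ico] at hk
      exact cellGap_ne_betaNum hL (by omega) hk.2 j hkj.symm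
  · rw [card_sdiff_of_subset (image_betaNum_Ico_subset hL i),
      card_image_of_injOn (injOn_betaNum_Ico hL i),
      card_image_of_injective _ (cellGap_strictMono i).injective, card_range, card_range,
      Nat.card_Ico, betaNum]
    omega

theorem card_filter_dvd_hookLen_add {l : ℕ} (hl : 0 < l) (hL : L.Pairwise (· ≥ ·)) (i : ℕ) :
    #{j ∈ range (L.getD i 0) | l ∣ hookLen L i j}
      + #{k ∈ Ico (i + 1) L.length | betaNum L k % l = betaNum L i % l} = betaNum L i / l := by
  set B := betaNum L i
  set S := (Ico (i + 1) L.length).image (betaNum L)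
  have hgaps : #{j ∈ range (L.getD i 0) | l ∣ hookLen L i j}
      = #{x ∈ range B \ S | x % l = B % l} := by
    rw [filter_congr fun j hj => dvd_hookLen_iff (mem_range.mp hj), ← image_cellGap hL i,
      filter_image, card_image_of_injective _ (cellGap_strictMono i).injective]
  have hbeads : #{x ∈ S | x % l = B % l}
      = #{k ∈ Ico (i + 1) L.length | betaNum L k % l = B % l} := by
    rw [filter_image, card_image_of_injOn ((injOn_betaNum_Ico hL i).mono (filter_subset _ _))]
  have hsplit : {x ∈ range B \ S | x % l = B % l}
      = {x ∈ range B | x % l = B % l} \ {x ∈ S | x % l = B % l} := by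
    ext x
    simp only [mem_sdiff, mem_filter]
    tauto
  have hsub : {x ∈ S | x % l = B % l} ⊆ {x ∈ range B | x % l = B % l} :=
    filter_subset_filter _ (image_betaNum_Ico_subset hL i)
  rw [hgaps, hsplit, card_sdiff_of_subset hsub, ← hbeads, Nat.sub_add_cancel (card_le_card hsub),
    card_filter_mod_eq_range_self hl]

end

theorem statement0_general (l : ℕ) (hl : 2 ≤ l) (L : List ℕ)
    (hsorted : L.Pairwise (· ≥ ·)) :
    ∑ i ∈ Finset.range L.length,
      ((Finset.range (L.getD i 0)).filter (fun j => l ∣ hookLen L i j)).card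
      = lWeight l L := by
  have hl0 : 0 < l := by omega
  have hrows := sum_congr rfl fun i (_ : i ∈ range L.length) =>
    card_filter_dvd_hookLen_add hl0 hsorted i
  rw [sum_add_distrib, sum_card_filter_Ico_eq_sum_choose_two (t := range l)
    fun i _ => mem_range.mpr (Nat.mod_lt _ hl0)] at hrows
  simp only [lWeight, betaSet_eq_map_betaNum, List.map_map, List.sum_map_range,
    List.length_filter_map_range, Function.comp_def, decide_eq_true_eq]
  omega

/-- The number of cells of a partition whose hook length is divisible by
`l ≥ 2` equals the `l`-weight of the partition. -/
theorem statement0 (l : ℕ) (hl : 2 ≤ l) (L : List ℕ)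
    (hsorted : L.Pairwise (· ≥ ·)) (hpos : ∀ a ∈ L, 0 < a) :
    ∑ i ∈ Finset.range L.length,
      ((Finset.range (L.getD i 0)).filter (fun j => l ∣ hookLen L i j)).card
      = lWeight l L :=
  statement0_general l hl L hsorted
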